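/- Let G be a group and let A_j(G) = {σ ∈ Aut(G) : σ(g)g⁻¹ ∈ Γ_{j+1}(G) for all g ∈ G} be the Andreadakis filtration. Then A_*(G) is strongly central: for all i, j ≥ 1 and σ ∈ A_i(G), τ ∈ A_j(G), the commutator [σ,τ] = στσ⁻¹τ⁻¹ belongs to A_{i+j}(G). -/

import Mathlib

/-!
The three subgroups lemma gives `⁅Γ m, Γ n⁆ ≤ Γ (m + n + 1)`, where
`Γ k = (⊤ : Subgroup G).lowerCentralSeries k`, so `Γ 0 = ⊤`. Consequently an endomorphism `σ`
moving every element by `Γ i` moves `Γ k` by `Γ (i + k)`: modulo `Γ (i + k + 1)`, on a generator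
`⁅x, y⁆` of `Γ (k + 1)` the correction `σ x * x⁻¹` is central and `σ y * y⁻¹` commutes with `x`
and with `⁅x, y⁆`, so `σ` fixes `⁅x, y⁆`. Finally, with `a = σ h * h⁻¹ ∈ Γ i`
and `c = τ h * h⁻¹ ∈ Γ j`, the element `σ (τ h) * (τ (σ h))⁻¹` is the product
`(σ c * c⁻¹) * ⁅c, a⁆ * (τ a * a⁻¹)⁻¹` of three elements of `Γ (i + j)`.
-/

open Subgroup

open scoped commutatorElement

section CommutatorIdentity

variable {H : Type*} [Group H]

theorem commutatorElement_mul_mul_eq {a x b y : H} (ha : a ∈ center H) (hxb : Commute x b)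
    (hb : Commute ⁅x, y⁆ b) : ⁅a * x, b * y⁆ = ⁅x, y⁆ := by
  have hca : ∀ z, Commute a z := fun z ↦ (mem_center_iff.mp ha z).symm
  rw [commutatorElement_mul_left_eq_conj_mul, (hca _).eq, mul_inv_cancel_right,
    (hca _).commutator_eq, mul_one, commutatorElement_mul_right_eq_mul_conj,
    hxb.commutator_eq, one_mul, hb.symm.eq, mul_inv_cancel_right]

theorem mul_apply_mul_inv_mul_apply {F : Type*} [FunLike F H H] [MonoidHomClass F H H]
    (σ τ : F) (h : H) :
    σ (τ h) * (τ (σ h))⁻¹ =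
      σ (τ h * h⁻¹) * (τ h * h⁻¹)⁻¹ * ⁅τ h * h⁻¹, σ h * h⁻¹⁆ *
        (τ (σ h * h⁻¹) * (σ h * h⁻¹)⁻¹)⁻¹ := by
  simp only [map_mul, map_inv, commutatorElement_def]
  group

end CommutatorIdentity

namespace Subgroup

variable {G : Type*} [Group G]

theorem commutator_commutator_le_of_rotate {H₁ H₂ H₃ N : Subgroup G} [N.Normal]
    (h1 : ⁅⁅H₂, H₃⁆, H₁⁆ ≤ N) (h2 : ⁅⁅H₃, H₁⁆, H₂⁆ ≤ N) : ⁅⁅H₁, H₂⁆, H₃⁆ ≤ N := by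
  simp only [← QuotientGroup.ker_mk' N, ← map_eq_bot_iff, map_commutator] at h1 h2 ⊢
  exact commutator_commutator_eq_bot_of_rotate h1 h2

theorem commutator_lowerCentralSeries_le (m n : ℕ) :
    ⁅(⊤ : Subgroup G).lowerCentralSeries m, (⊤ : Subgroup G).lowerCentralSeries n⁆ ≤
      (⊤ : Subgroup G).lowerCentralSeries (m + n + 1) := by
  induction n generalizing m with
  | zero => rfl
  | succ n ih =>
    rw [Subgroup.lowerCentralSeries_succ, commutator_comm]
    apply commutator_commutator_le_of_rotate
    · rw [commutator_comm ⊤, ← Subgroup.lowerCentralSeries_succ]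
      exact (ih (m + 1)).trans_eq (by congr 1; omega)
    · calc ⁅⁅lowerCentralSeries ⊤ m, lowerCentralSeries ⊤ n⁆, ⊤⁆
          ≤ ⁅lowerCentralSeries ⊤ (m + n + 1), ⊤⁆ := commutator_mono (ih m) le_rfl
        _ = lowerCentralSeries ⊤ (m + (n + 1) + 1) := by
          rw [← Subgroup.lowerCentralSeries_succ]; rfl

theorem commutatorElement_mem_lowerCentralSeries {m n k : ℕ} {a b : G}
    (ha : a ∈ (⊤ : Subgroup G).lowerCentralSeries m)
    (hb : b ∈ (⊤ : Subgroup G).lowerCentralSeries n) (hk : k ≤ m + n + 1) :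
    ⁅a, b⁆ ∈ (⊤ : Subgroup G).lowerCentralSeries k :=
  Subgroup.lowerCentralSeries_antitone ⊤ hk
    (commutator_lowerCentralSeries_le m n (commutator_mem_commutator ha hb))

theorem commute_mk_lowerCentralSeries {m n k : ℕ} {a b : G}
    (ha : a ∈ (⊤ : Subgroup G).lowerCentralSeries m)
    (hb : b ∈ (⊤ : Subgroup G).lowerCentralSeries n) (hk : k ≤ m + n + 1) :
    Commute (a : G ⧸ (⊤ : Subgroup G).lowerCentralSeries k) b := by
  rw [← commutatorElement_eq_one_iff_commute, ← QuotientGroup.mk'_apply,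
    ← QuotientGroup.mk'_apply, ← map_commutatorElement, QuotientGroup.mk'_apply,
    QuotientGroup.eq_one_iff]
  exact commutatorElement_mem_lowerCentralSeries ha hb hk

end Subgroup

theorem apply_mul_inv_mem_lowerCentralSeries_add {G F : Type*} [Group G] [FunLike F G G]
    [MonoidHomClass F G G] {i : ℕ} {σ : F}
    (hσ : ∀ g : G, σ g * g⁻¹ ∈ (⊤ : Subgroup G).lowerCentralSeries i) (k : ℕ)
    {g : G} (hg : g ∈ (⊤ : Subgroup G).lowerCentralSeries k) :
    σ g * g⁻¹ ∈ (⊤ : Subgroup G).lowerCentralSeries (i + k) := by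
  induction k generalizing g with
  | zero => exact hσ g
  | succ k ih =>
    set N := (⊤ : Subgroup G).lowerCentralSeries (i + (k + 1))
    let π := QuotientGroup.mk' N
    suffices (⊤ : Subgroup G).lowerCentralSeries (k + 1) ≤ (π.comp (σ : G →* G)).eqLocus π from
      div_eq_mul_inv (σ g) g ▸ QuotientGroup.eq_iff_div_mem.mp (this hg)
    rw [Subgroup.lowerCentralSeries_succ, commutator_le]
    intro x hx y _
    have hcentral : ((σ x * x⁻¹ : G) : G ⧸ N) ∈ center (G ⧸ N) := by
      refine mem_center_iff.mpr fun z ↦ ?_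
      induction z using QuotientGroup.induction_on with
      | H z => exact (commute_mk_lowerCentralSeries (m := 0) (mem_top z) (ih hx) (by omega)).eq
    have mk_commutatorElement (u v : G) : ((⁅u, v⁆ : G) : G ⧸ N) = ⁅(u : G ⧸ N), (v : G ⧸ N)⁆ :=
      map_commutatorElement π u v
    have hxy : ⁅x, y⁆ ∈ (⊤ : Subgroup G).lowerCentralSeries (k + 1) :=
      commutator_mem_commutator hx (mem_top y)
    calc π (σ ⁅x, y⁆)
        = ⁅((σ x * x⁻¹ : G) : G ⧸ N) * x, ((σ y * y⁻¹ : G) : G ⧸ N) * y⁆ := by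
          simp [π, map_commutatorElement]
      _ = ⁅(x : G ⧸ N), (y : G ⧸ N)⁆ :=
          commutatorElement_mul_mul_eq hcentral
            (commute_mk_lowerCentralSeries hx (hσ y) (by omega))
            (mk_commutatorElement x y ▸ commute_mk_lowerCentralSeries hxy (hσ y) (by omega))
      _ = π ⁅x, y⁆ := by simp [π, map_commutatorElement]

theorem andreadakis_strongly_central_general {G : Type*} [Group G] (i j : ℕ)
    (σ τ : MulAut G)
    (hσ : ∀ g : G, σ g * g⁻¹ ∈ (⊤ : Subgroup G).lowerCentralSeries i)
    (hτ : ∀ g : G, τ g * g⁻¹ ∈ (⊤ : Subgroup G).lowerCentralSeries j) :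
    ∀ g : G, ⁅σ, τ⁆ g * g⁻¹ ∈ (⊤ : Subgroup G).lowerCentralSeries (i + j) := by
  intro g
  obtain ⟨h, rfl⟩ := (τ * σ).surjective g
  have hcomm : ⁅σ, τ⁆ ((τ * σ) h) * ((τ * σ) h)⁻¹ = σ (τ h) * (τ (σ h))⁻¹ := by
    simp [commutatorElement_def]
  rw [hcomm, mul_apply_mul_inv_mul_apply σ τ h]
  have hσh := hσ h
  have hτh := hτ h
  refine mul_mem (mul_mem ?_ ?_) (inv_mem ?_)
  · exact apply_mul_inv_mem_lowerCentralSeries_add hσ j hτh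
  · exact commutatorElement_mem_lowerCentralSeries hτh hσh (by omega)
  · exact add_comm j i ▸ apply_mul_inv_mem_lowerCentralSeries_add hτ i hσh

/-- The Andreadakis filtration `A_j(G) = {σ ∈ Aut G : ∀ g, σ(g)g⁻¹ ∈ Γ_{j+1}(G)}` is
strongly central: if `σ ∈ A_i(G)` and `τ ∈ A_j(G)` then `⁅σ,τ⁆ ∈ A_{i+j}(G)`.
(Here `Γ_{j+1}(G) = lowerCentralSeries G j`.) -/
theorem andreadakis_strongly_central {G : Type*} [Group G] (i j : ℕ)
    (hi : 1 ≤ i) (hj : 1 ≤ j) (σ τ : MulAut G)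
    (hσ : ∀ g : G, σ g * g⁻¹ ∈ (⊤ : Subgroup G).lowerCentralSeries i)
    (hτ : ∀ g : G, τ g * g⁻¹ ∈ (⊤ : Subgroup G).lowerCentralSeries j) :
    ∀ g : G, ⁅σ, τ⁆ g * g⁻¹ ∈ (⊤ : Subgroup G).lowerCentralSeries (i + j) :=
  andreadakis_strongly_central_general i j σ τ hσ hτ
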